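/- Consider the binary channel with inputs X1, X2 in {0,1} and outputs Y2 = X2 XOR Z and Y1 = X1 XOR Y2, where Z is Bernoulli(epsilon) and independent of (X1,X2). Then the maximum over all independent binary inputs X1, X2 of I(X1;Y1) + I(X2;Y2) equals 1 - h2(epsilon), and this maximum is attained by any product input distribution making H(Y1) = 1 (e.g., X1 uniform). -/

import Mathlib

open scoped BigOperators

noncomputable section

namespace IT

/-- A probability mass function on a finite type. -/
def IsPMF {α : Type*} [Fintype α] (p : α → ℝ) : Prop :=
  (∀ a, 0 ≤ p a) ∧ ∑ a, p a = 1

/-- The distribution (pushforward) of a random variable `X` under the pmf `μ`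
on the sample space `Ω`. -/
def distOf {Ω α : Type*} [Fintype Ω] [DecidableEq α] (μ : Ω → ℝ) (X : Ω → α) : α → ℝ :=
  fun a => ∑ ω, if X ω = a then μ ω else 0

/-- Shannon entropy (base-2 logarithms) of a pmf on a finite type.
(Recall `Real.logb 2 0 = 0`, so the `0 log 0 = 0` convention is automatic.) -/
def ent {α : Type*} [Fintype α] (p : α → ℝ) : ℝ := -∑ a, p a * Real.logb 2 (p a)

/-- Entropy `H(X)` of a finite-valued random variable `X` on `(Ω, μ)`. -/
def H {Ω α : Type*} [Fintype Ω] [Fintype α] [DecidableEq α] (μ : Ω → ℝ) (X : Ω → α) : ℝ :=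
  ent (distOf μ X)

/-- Mutual information `I(X;Y)`. -/
def MI {Ω α β : Type*} [Fintype Ω] [Fintype α] [DecidableEq α] [Fintype β] [DecidableEq β]
    (μ : Ω → ℝ) (X : Ω → α) (Y : Ω → β) : ℝ :=
  H μ X + H μ Y - H μ (fun ω => (X ω, Y ω))

/-- Conditional mutual information `I(X;Y|Z)`. -/
def CMI {Ω α β γ : Type*} [Fintype Ω] [Fintype α] [DecidableEq α] [Fintype β] [DecidableEq β]
    [Fintype γ] [DecidableEq γ] (μ : Ω → ℝ) (X : Ω → α) (Y : Ω → β) (Z : Ω → γ) : ℝ :=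
  H μ (fun ω => (X ω, Z ω)) + H μ (fun ω => (Y ω, Z ω))
    - H μ (fun ω => (X ω, Y ω, Z ω)) - H μ Z

/-- `B` is conditionally independent of `A` given `C` (a Markov chain `A - C - B`). -/
def CondIndep {Ω α β γ : Type*} [Fintype Ω] [DecidableEq α] [DecidableEq β] [DecidableEq γ]
    (μ : Ω → ℝ) (A : Ω → α) (B : Ω → β) (C : Ω → γ) : Prop :=
  ∀ a b c,
    distOf μ (fun ω => (A ω, B ω, C ω)) (a, b, c) * distOf μ C c =
      distOf μ (fun ω => (A ω, C ω)) (a, c) * distOf μ (fun ω => (B ω, C ω)) (b, c)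

variable {A1 A2 B1 B2 : Type*}

/-- A discrete memoryless interference channel with input alphabets `A1, A2` and
output alphabets `B1, B2`: every pair of inputs yields a pmf on output pairs. -/
def IsChannel [Fintype B1] [Fintype B2] (W : A1 → A2 → B1 × B2 → ℝ) : Prop :=
  ∀ x1 x2, IsPMF (W x1 x2)

/-- DMZIC with weak interference: the transition probability factorizes as
`p(y1,y2|x1,x2) = p(y2|x2) q(y1|x1,y2)`, i.e. one-sided interference together with
the Markov chain `X2 - (X1,Y2) - Y1`. -/
def WeakZ [Fintype B1] [Fintype B2] (W : A1 → A2 → B1 × B2 → ℝ) : Prop :=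
  ∃ (p2 : A2 → B2 → ℝ) (q : A1 → B2 → B1 → ℝ),
    (∀ x2, IsPMF (p2 x2)) ∧ (∀ x1 y2, IsPMF (q x1 y2)) ∧
      ∀ x1 x2 y1 y2, W x1 x2 (y1, y2) = p2 x2 y2 * q x1 y2 y1

/-- Factorization `p(y1,y2|x1,x2) = p(y2|x1,x2) q(y1|x1,y2)`, i.e. the Markov chain
`X2 - (X1,Y2) - Y1`. -/
def ChainX2X1Y2Y1 [Fintype B1] [Fintype B2] (W : A1 → A2 → B1 × B2 → ℝ) : Prop :=
  ∃ (pa : A1 → A2 → B2 → ℝ) (q : A1 → B2 → B1 → ℝ),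
    (∀ x1 x2, IsPMF (pa x1 x2)) ∧ (∀ x1 y2, IsPMF (q x1 y2)) ∧
      ∀ x1 x2 y1 y2, W x1 x2 (y1, y2) = pa x1 x2 y2 * q x1 y2 y1

/-- The `n`-fold memoryless extension of the channel `W`. -/
def nFold (W : A1 → A2 → B1 × B2 → ℝ) (n : ℕ) (a : Fin n → A1) (b : Fin n → A2)
    (y : (Fin n → B1) × (Fin n → B2)) : ℝ :=
  ∏ i, W (a i) (b i) (y.1 i, y.2 i)

/-- An `(n, M1, M2)` code for the interference channel. -/
structure Code (A1 A2 B1 B2 : Type*) (n M1 M2 : ℕ) where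
  enc1 : Fin M1 → Fin n → A1
  enc2 : Fin M2 → Fin n → A2
  dec1 : (Fin n → B1) → Fin M1
  dec2 : (Fin n → B2) → Fin M2

/-- Average probability of error at receiver 1 (messages uniform and independent). -/
def err1 [Fintype B1] [Fintype B2] (W : A1 → A2 → B1 × B2 → ℝ) {n M1 M2 : ℕ}
    (c : Code A1 A2 B1 B2 n M1 M2) : ℝ :=
  ((M1 : ℝ) * (M2 : ℝ))⁻¹ *
    ∑ w1 : Fin M1, ∑ w2 : Fin M2, ∑ y : (Fin n → B1) × (Fin n → B2),
      if c.dec1 y.1 ≠ w1 then nFold W n (c.enc1 w1) (c.enc2 w2) y else 0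

/-- Average probability of error at receiver 2 (messages uniform and independent). -/
def err2 [Fintype B1] [Fintype B2] (W : A1 → A2 → B1 × B2 → ℝ) {n M1 M2 : ℕ}
    (c : Code A1 A2 B1 B2 n M1 M2) : ℝ :=
  ((M1 : ℝ) * (M2 : ℝ))⁻¹ *
    ∑ w1 : Fin M1, ∑ w2 : Fin M2, ∑ y : (Fin n → B1) × (Fin n → B2),
      if c.dec2 y.2 ≠ w2 then nFold W n (c.enc1 w1) (c.enc2 w2) y else 0

/-- A (nonnegative) rate pair `(R1, R2)` is achievable if there are codes of blocklength `n`,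
with at least `2 ^ (n R1)` and `2 ^ (n R2)` messages, whose average error probabilities at
the two receivers can be made arbitrarily small. -/
def Achievable [Fintype B1] [Fintype B2] (W : A1 → A2 → B1 × B2 → ℝ) (R1 R2 : ℝ) : Prop :=
  0 ≤ R1 ∧ 0 ≤ R2 ∧ ∀ ε : ℝ, 0 < ε →
    ∃ (n M1 M2 : ℕ) (c : Code A1 A2 B1 B2 n M1 M2), 0 < n ∧
      (2 : ℝ) ^ ((n : ℝ) * R1) ≤ (M1 : ℝ) ∧ (2 : ℝ) ^ ((n : ℝ) * R2) ≤ (M2 : ℝ) ∧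
      err1 W c ≤ ε ∧ err2 W c ≤ ε

/-- The sum-rate capacity: the supremum of `R1 + R2` over achievable rate pairs. -/
def sumCapacity [Fintype B1] [Fintype B2] (W : A1 → A2 → B1 × B2 → ℝ) : ℝ :=
  sSup {r : ℝ | ∃ R1 R2 : ℝ, Achievable W R1 R2 ∧ r = R1 + R2}

/-- The capacity region: the closure of the set of achievable rate pairs. -/
def capacityRegion [Fintype B1] [Fintype B2] (W : A1 → A2 → B1 × B2 → ℝ) : Set (ℝ × ℝ) :=
  closure {p : ℝ × ℝ | Achievable W p.1 p.2}

/-- The joint pmf of `(X1, X2, Y1, Y2)` when the product input `p1 × p2` is fed to `W`. -/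
def jointOf (W : A1 → A2 → B1 × B2 → ℝ) (p1 : A1 → ℝ) (p2 : A2 → ℝ) :
    A1 × A2 × B1 × B2 → ℝ :=
  fun z => p1 z.1 * p2 z.2.1 * W z.1 z.2.1 (z.2.2.1, z.2.2.2)

/-- Coordinate projections on `A1 × A2 × B1 × B2`. -/
def pX1 : A1 × A2 × B1 × B2 → A1 := fun z => z.1
def pX2 : A1 × A2 × B1 × B2 → A2 := fun z => z.2.1
def pY1 : A1 × A2 × B1 × B2 → B1 := fun z => z.2.2.1
def pY2 : A1 × A2 × B1 × B2 → B2 := fun z => z.2.2.2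

/-- The binary entropy function (base-2 logarithms). -/
def h2 (t : ℝ) : ℝ := -(t * Real.logb 2 t) - (1 - t) * Real.logb 2 (1 - t)

end IT

namespace IT

/-- Bernoulli pmf on `Bool`: `P(true) = ε`. -/
def bern (ε : ℝ) : Bool → ℝ := fun b => if b then ε else 1 - ε

/-- Joint pmf of `(X1, X2, Z)` with `X1 ~ p1`, `X2 ~ p2`, `Z ~ Bern(ε)` independent. -/
def muXor (ε : ℝ) (p1 p2 : Bool → ℝ) : Bool × Bool × Bool → ℝ :=
  fun z => p1 z.1 * p2 z.2.1 * bern ε z.2.2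

/-! Both receivers see the input through additive noise: `Y1 = X1 ⊕ Y2` with `Y2` independent
of `X1`, and `Y2 = X2 ⊕ Z` with `Z` independent of `X2`. For independent `X` and `N` the shear
`(x, n) ↦ (x, x ⊕ n)` gives `H(X, X ⊕ N) = H(X) + H(N)`, hence `I(X; X ⊕ N) = H(X ⊕ N) - H(N)`.
The sum of the two mutual informations telescopes to `H(Y1) - H(Z) = H(Y1) - h2 ε ≤ 1 - h2 ε`,
with equality iff `H(Y1) = 1`; a uniform `X1` makes `Y1` uniform. -/

open Real

def pmfProd {α β : Type*} (u : α → ℝ) (v : β → ℝ) : α × β → ℝ := fun ω => u ω.1 * v ω.2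

theorem sum_pmfProd {α β : Type*} [Fintype α] [Fintype β] {u : α → ℝ} {v : β → ℝ}
    (hu : ∑ a, u a = 1) (hv : ∑ b, v b = 1) : ∑ ω, pmfProd u v ω = 1 := by
  simp only [pmfProd, Fintype.sum_prod_type, ← Fintype.sum_mul_sum, hu, hv, one_mul]

section Pushforward

variable {Ω α β γ δ : Type*} [Fintype Ω]

theorem sum_distOf [Fintype α] [DecidableEq α] (μ : Ω → ℝ) (X : Ω → α) :
    ∑ a, distOf μ X a = ∑ ω, μ ω := by
  simp only [distOf]
  rw [Finset.sum_comm]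
  simp

theorem distOf_id [DecidableEq Ω] (μ : Ω → ℝ) : distOf μ (fun ω => ω) = μ := by
  funext ω
  simp [distOf]

theorem distOf_comp [Fintype α] [DecidableEq α] [DecidableEq β] (μ : Ω → ℝ) (X : Ω → α)
    (g : α → β) (b : β) :
    distOf μ (fun ω => g (X ω)) b = ∑ a, if g a = b then distOf μ X a else 0 := by
  calc ∑ ω, (if g (X ω) = b then μ ω else 0)
      = ∑ ω, ∑ a, if X ω = a then (if g a = b then μ ω else 0) else 0 := by simp
    _ = _ := by
      rw [Finset.sum_comm]
      refine Finset.sum_congr rfl fun a _ => ?_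
      split_ifs <;> simp_all [distOf]

theorem distOf_comp_equiv [Fintype α] [DecidableEq α] [DecidableEq β] (μ : Ω → ℝ)
    (X : Ω → α) (e : α ≃ β) (b : β) :
    distOf μ (fun ω => e (X ω)) b = distOf μ X (e.symm b) := by
  simp [distOf_comp, ← e.eq_symm_apply]

variable [Fintype α] [Fintype β]

theorem distOf_pmfProd [DecidableEq γ] [DecidableEq δ] (u : α → ℝ) (v : β → ℝ)
    (f : α → γ) (g : β → δ) (c : γ) (d : δ) :
    distOf (pmfProd u v) (fun ω => (f ω.1, g ω.2)) (c, d) =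
      distOf u f c * distOf v g d := by
  simp only [distOf, pmfProd, Fintype.sum_prod_type, Finset.sum_mul_sum, Prod.mk.injEq, ite_and]
  refine Finset.sum_congr rfl fun a _ => Finset.sum_congr rfl fun b _ => ?_
  split_ifs <;> simp

theorem distOf_pmfProd_fst [DecidableEq γ] (u : α → ℝ) (v : β → ℝ) (hv : ∑ b, v b = 1)
    (f : α → γ) :
    distOf (pmfProd u v) (fun ω => f ω.1) = distOf u f := by
  funext c
  simp only [distOf, pmfProd, Fintype.sum_prod_type]
  refine Finset.sum_congr rfl fun a _ => ?_
  split_ifs <;> simp [← Finset.mul_sum, hv]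

theorem distOf_pmfProd_snd [DecidableEq δ] (u : α → ℝ) (v : β → ℝ) (hu : ∑ a, u a = 1)
    (g : β → δ) :
    distOf (pmfProd u v) (fun ω => g ω.2) = distOf v g := by
  funext d
  simp only [distOf, pmfProd, Fintype.sum_prod_type]
  rw [Finset.sum_comm]
  refine Finset.sum_congr rfl fun b _ => ?_
  split_ifs <;> simp [← Finset.sum_mul, hu]

end Pushforward

def IndepFun {Ω α β : Type*} [Fintype Ω] [DecidableEq α] [DecidableEq β] (μ : Ω → ℝ)
    (X : Ω → α) (Y : Ω → β) : Prop :=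
  ∀ a b, distOf μ (fun ω => (X ω, Y ω)) (a, b) = distOf μ X a * distOf μ Y b

theorem indepFun_pmfProd {α β γ δ : Type*} [Fintype α] [Fintype β] [DecidableEq γ]
    [DecidableEq δ] (u : α → ℝ) (v : β → ℝ) (hu : ∑ a, u a = 1) (hv : ∑ b, v b = 1)
    (f : α → γ) (g : β → δ) :
    IndepFun (pmfProd u v) (fun ω => f ω.1) (fun ω => g ω.2) := by
  intro c d
  rw [distOf_pmfProd, distOf_pmfProd_fst u v hv, distOf_pmfProd_snd u v hu]

section Entropy

variable {α β : Type*} [Fintype α] [Fintype β]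

theorem ent_eq_sum_negMulLog (p : α → ℝ) : ent p = (∑ a, negMulLog (p a)) / log 2 := by
  simp only [ent, negMulLog, logb, Finset.sum_div]
  rw [← Finset.sum_neg_distrib]
  exact Finset.sum_congr rfl fun a _ => by ring

theorem ent_comp_equiv (p : β → ℝ) (e : α ≃ β) : ent (fun a => p (e a)) = ent p := by
  simp only [ent, e.sum_comp (fun b => p b * logb 2 (p b))]

theorem ent_pmfProd (u : α → ℝ) (v : β → ℝ) (hu : ∑ a, u a = 1) (hv : ∑ b, v b = 1) :
    ent (pmfProd u v) = ent u + ent v := by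
  simp only [ent_eq_sum_negMulLog, pmfProd, Fintype.sum_prod_type, negMulLog_mul,
    Finset.sum_add_distrib, ← Finset.sum_mul, ← Finset.mul_sum, hu, hv, one_mul, ← add_div]

theorem h2_eq_binEntropy_div (t : ℝ) : h2 t = binEntropy t / log 2 := by
  simp only [h2, binEntropy, logb, log_inv]
  ring

theorem h2_le_one (t : ℝ) : h2 t ≤ 1 := by
  rw [h2_eq_binEntropy_div, div_le_one (log_pos one_lt_two)]
  exact binEntropy_le_log_two

theorem ent_bool (p : Bool → ℝ) (hp : ∑ b, p b = 1) : ent p = h2 (p true) := by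
  rw [Fintype.sum_bool] at hp
  simp only [ent, h2, Fintype.sum_bool, show p false = 1 - p true by linarith]
  ring

theorem ent_bool_le_one (p : Bool → ℝ) (hp : ∑ b, p b = 1) : ent p ≤ 1 :=
  ent_bool p hp ▸ h2_le_one _

theorem ent_uniform_bool : ent (fun _ : Bool => (2 : ℝ)⁻¹) = 1 := by
  simp [ent, logb_inv]

end Entropy

section RandomVariables

variable {Ω α β : Type*} [Fintype Ω] [Fintype α] [DecidableEq α] [Fintype β] [DecidableEq β]
  {μ : Ω → ℝ}

theorem H_comp_equiv (X : Ω → α) (e : α ≃ β) : H μ (fun ω => e (X ω)) = H μ X := by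
  rw [H, H, ← ent_comp_equiv _ e]
  simp only [distOf_comp_equiv, Equiv.symm_apply_apply]

theorem H_pair_of_indepFun (hμ : ∑ ω, μ ω = 1) {X : Ω → α} {Y : Ω → β} (h : IndepFun μ X Y) :
    H μ (fun ω => (X ω, Y ω)) = H μ X + H μ Y := by
  have hjoint : distOf μ (fun ω => (X ω, Y ω)) = pmfProd (distOf μ X) (distOf μ Y) :=
    funext fun q => h q.1 q.2
  rw [H, hjoint, ent_pmfProd _ _ (by rw [sum_distOf, hμ]) (by rw [sum_distOf, hμ])]
  rfl

theorem H_bool_le_one (hμ : ∑ ω, μ ω = 1) (X : Ω → Bool) : H μ X ≤ 1 :=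
  ent_bool_le_one _ (by rw [sum_distOf, hμ])

def xorShear : Bool × Bool ≃ Bool × Bool :=
  Function.Involutive.toPerm (fun q => (q.1, xor q.1 q.2)) fun q => by simp

theorem MI_xor_of_indepFun (hμ : ∑ ω, μ ω = 1) {X N : Ω → Bool} (h : IndepFun μ X N) :
    MI μ X (fun ω => xor (X ω) (N ω)) = H μ (fun ω => xor (X ω) (N ω)) - H μ N := by
  have hshear : H μ (fun ω => (X ω, xor (X ω) (N ω))) = H μ (fun ω => (X ω, N ω)) :=
    H_comp_equiv (fun ω => (X ω, N ω)) xorShear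
  rw [MI, hshear, H_pair_of_indepFun hμ h]
  ring

theorem distOf_xor_of_uniform (hμ : ∑ ω, μ ω = 1) {X N : Ω → Bool} (h : IndepFun μ X N)
    (hX : distOf μ X = fun _ => (2 : ℝ)⁻¹) :
    distOf μ (fun ω => xor (X ω) (N ω)) = fun _ => (2 : ℝ)⁻¹ := by
  have hN : distOf μ N true + distOf μ N false = 1 := by
    rw [← Fintype.sum_bool, sum_distOf, hμ]
  funext c
  rw [distOf_comp μ (fun ω => (X ω, N ω)) (fun q => xor q.1 q.2)]
  cases c <;> simp [Fintype.sum_prod_type, h _ _, hX] <;> linear_combination (2 : ℝ)⁻¹ * hN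

end RandomVariables

theorem sum_bern (ε : ℝ) : ∑ b, bern ε b = 1 := by
  simp [bern]

theorem muXor_eq_pmfProd (ε : ℝ) (p1 p2 : Bool → ℝ) :
    muXor ε p1 p2 = pmfProd p1 (pmfProd p2 (bern ε)) := by
  funext z
  simp only [muXor, pmfProd, mul_assoc]

section XorChannel

variable {ε : ℝ} {p1 p2 : Bool → ℝ}

theorem sum_muXor (hp1 : ∑ a, p1 a = 1) (hp2 : ∑ a, p2 a = 1) : ∑ z, muXor ε p1 p2 z = 1 := by
  rw [muXor_eq_pmfProd]
  exact sum_pmfProd hp1 (sum_pmfProd hp2 (sum_bern ε))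

theorem indepFun_muXor_X1_Y2 (hp1 : ∑ a, p1 a = 1) (hp2 : ∑ a, p2 a = 1) :
    IndepFun (muXor ε p1 p2) (fun z => z.1) (fun z => xor z.2.1 z.2.2) := by
  rw [muXor_eq_pmfProd]
  exact indepFun_pmfProd _ _ hp1 (sum_pmfProd hp2 (sum_bern ε)) (fun a => a)
    fun y => xor y.1 y.2

theorem indepFun_muXor_X2_Z (hp1 : ∑ a, p1 a = 1) (hp2 : ∑ a, p2 a = 1) :
    IndepFun (muXor ε p1 p2) (fun z => z.2.1) (fun z => z.2.2) := by
  rw [muXor_eq_pmfProd]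
  intro a b
  simp only [distOf_pmfProd_snd _ _ hp1 (fun y : Bool × Bool => (y.1, y.2)),
    distOf_pmfProd_snd _ _ hp1 (fun y : Bool × Bool => y.1),
    distOf_pmfProd_snd _ _ hp1 (fun y : Bool × Bool => y.2)]
  exact indepFun_pmfProd _ _ hp2 (sum_bern ε) (fun x => x) (fun x => x) a b

theorem distOf_muXor_Z (hp1 : ∑ a, p1 a = 1) (hp2 : ∑ a, p2 a = 1) :
    distOf (muXor ε p1 p2) (fun z => z.2.2) = bern ε := by
  rw [muXor_eq_pmfProd]
  simp only [distOf_pmfProd_snd _ _ hp1 (fun y : Bool × Bool => y.2),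
    distOf_pmfProd_snd _ _ hp2 (fun b => b)]
  exact distOf_id _

theorem distOf_muXor_X1 (hp2 : ∑ a, p2 a = 1) :
    distOf (muXor ε p1 p2) (fun z => z.1) = p1 := by
  rw [muXor_eq_pmfProd, distOf_pmfProd_fst _ _ (sum_pmfProd hp2 (sum_bern ε)) (fun a => a)]
  exact distOf_id _

theorem sum_MI_muXor (hp1 : ∑ a, p1 a = 1) (hp2 : ∑ a, p2 a = 1) :
    MI (muXor ε p1 p2) (fun z => z.1) (fun z => xor z.1 (xor z.2.1 z.2.2))
      + MI (muXor ε p1 p2) (fun z => z.2.1) (fun z => xor z.2.1 z.2.2)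
      = H (muXor ε p1 p2) (fun z => xor z.1 (xor z.2.1 z.2.2)) - h2 ε := by
  have hμ := sum_muXor (ε := ε) hp1 hp2
  have hZ : H (muXor ε p1 p2) (fun z => z.2.2) = h2 ε := by
    rw [H, distOf_muXor_Z hp1 hp2, ent_bool _ (sum_bern ε)]
    rfl
  rw [MI_xor_of_indepFun hμ (indepFun_muXor_X1_Y2 hp1 hp2),
    MI_xor_of_indepFun hμ (indepFun_muXor_X2_Z hp1 hp2), hZ]
  ring

theorem H_muXor_Y1_of_uniform (hp2 : ∑ a, p2 a = 1) :
    H (muXor ε (fun _ => (2 : ℝ)⁻¹) p2) (fun z => xor z.1 (xor z.2.1 z.2.2)) = 1 := by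
  have huniform : ∑ _ : Bool, (2 : ℝ)⁻¹ = 1 := by norm_num
  rw [H, distOf_xor_of_uniform (sum_muXor huniform hp2) (indepFun_muXor_X1_Y2 huniform hp2)
    (distOf_muXor_X1 hp2)]
  exact ent_uniform_bool

end XorChannel

theorem binary_xor_sum_MI_max_general (ε : ℝ) :
    IsGreatest
      {v : ℝ | ∃ p1 p2 : Bool → ℝ, IsPMF p1 ∧ IsPMF p2 ∧
        v = MI (muXor ε p1 p2) (fun z => z.1) (fun z => xor z.1 (xor z.2.1 z.2.2))
          + MI (muXor ε p1 p2) (fun z => z.2.1) (fun z => xor z.2.1 z.2.2)}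
      (1 - h2 ε)
    ∧ (∀ p1 p2 : Bool → ℝ, IsPMF p1 → IsPMF p2 →
        H (muXor ε p1 p2) (fun z => xor z.1 (xor z.2.1 z.2.2)) = 1 →
        MI (muXor ε p1 p2) (fun z => z.1) (fun z => xor z.1 (xor z.2.1 z.2.2))
          + MI (muXor ε p1 p2) (fun z => z.2.1) (fun z => xor z.2.1 z.2.2) = 1 - h2 ε)
    ∧ (∀ p2 : Bool → ℝ, IsPMF p2 →
        H (muXor ε (fun _ => (2 : ℝ)⁻¹) p2) (fun z => xor z.1 (xor z.2.1 z.2.2)) = 1) := by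
  have huniform : IsPMF (fun _ : Bool => (2 : ℝ)⁻¹) := ⟨fun _ => by norm_num, by norm_num⟩
  refine ⟨⟨⟨_, _, huniform, huniform, ?_⟩, ?_⟩, ?_, fun p2 hp2 => H_muXor_Y1_of_uniform hp2.2⟩
  · rw [sum_MI_muXor huniform.2 huniform.2, H_muXor_Y1_of_uniform huniform.2]
  · rintro v ⟨p1, p2, hp1, hp2, rfl⟩
    rw [sum_MI_muXor hp1.2 hp2.2]
    linarith [H_bool_le_one (sum_muXor (ε := ε) hp1.2 hp2.2)
      (fun z => xor z.1 (xor z.2.1 z.2.2))]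
  · intro p1 p2 hp1 hp2 hY1
    rw [sum_MI_muXor hp1.2 hp2.2, hY1]

/-- For the channel `Y2 = X2 ⊕ Z`, `Y1 = X1 ⊕ Y2` with `Z ~ Bern(ε)`
independent of the inputs: the maximum of `I(X1;Y1) + I(X2;Y2)` over independent binary
inputs equals `1 - h2(ε)`, it is attained exactly when `H(Y1) = 1`, e.g. for `X1` uniform. -/
theorem binary_xor_sum_MI_max (ε : ℝ) (hε : ε ∈ Set.Icc (0 : ℝ) 1) :
    IsGreatest
      {v : ℝ | ∃ p1 p2 : Bool → ℝ, IsPMF p1 ∧ IsPMF p2 ∧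
        v = MI (muXor ε p1 p2) (fun z => z.1) (fun z => xor z.1 (xor z.2.1 z.2.2))
          + MI (muXor ε p1 p2) (fun z => z.2.1) (fun z => xor z.2.1 z.2.2)}
      (1 - h2 ε)
    ∧ (∀ p1 p2 : Bool → ℝ, IsPMF p1 → IsPMF p2 →
        H (muXor ε p1 p2) (fun z => xor z.1 (xor z.2.1 z.2.2)) = 1 →
        MI (muXor ε p1 p2) (fun z => z.1) (fun z => xor z.1 (xor z.2.1 z.2.2))
          + MI (muXor ε p1 p2) (fun z => z.2.1) (fun z => xor z.2.1 z.2.2) = 1 - h2 ε)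
    ∧ (∀ p2 : Bool → ℝ, IsPMF p2 →
        H (muXor ε (fun _ => (2 : ℝ)⁻¹) p2) (fun z => xor z.1 (xor z.2.1 z.2.2)) = 1) :=
  binary_xor_sum_MI_max_general ε

end IT
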